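/- Let X be a finite set, T a stochastic matrix on X, L the associated generator, Γ the carré du champ operator, and π a fully supported probability measure on X with πT = π. Assume the non-negative curvature condition: for all t ≥ 0 and all g : X → ℝ, Γ(exp(tL)g) ≤ exp(tL)(Γg) pointwise. Fix o ∈ X, let μ_s = δ_o·exp(sL) and f_s = μ_s/π. Fix t > 0 and assume f_t(x) > 0 for all x ∈ X. Then ∑_x π(x) f_t(x)·(L log f_t)(x) ≤ - Varent(μ_t) / (2t·(1 + Lip(log f_t))), where Varent(μ_t) = ∑_x π(x) f_t(x)(log f_t(x))² - (∑_x π(x) f_t(x) log f_t(x))² and Lip(g) = max{|g(x) - g(y)| : T(x,y) > 0}. In particular, since ∑_x π(x) f_t(x)(L log f_t)(x) is the time derivative of the entropy s ↦ Ent(μ_s) at s = t, the derivative of the entropy at time t is at most -Varent(μ_t)/(2t(1 + Lip(log f_t))). -/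

import Mathlib

/-!
Two estimates are chained, with `f = f_t`, `g = log f` and `P_s = exp (s L)`.
Differentiating `s ↦ P_s ((P_{t-s} g)²)(o)` gives `2 P_s Γ(P_{t-s} g)(o)`, which curvature bounds
by `2 P_t Γg (o)`; integrating over `[0, t]` yields the local reverse Poincaré inequality
`Varent(μ_t) ≤ 2t ∑ π f Γg`. On an edge with increment `u` of `g`, the elementary inequality
`u²/2 ≤ (1 + |u|)(eᵘ - 1 - u)` compares `f Γg` with `L f - f L g`, and `∑ π L f = 0` by
stationarity, so `∑ π f Γg ≤ (1 + Lip g) (-∑ π f L g)`.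
-/

variable {X : Type*}

/-- `T` is a stochastic matrix: nonnegative entries and unit row sums. -/
def IsStochastic [Fintype X] (T : X → X → ℝ) : Prop :=
  (∀ x y, 0 ≤ T x y) ∧ ∀ x, ∑ y, T x y = 1

/-- The generator: `(L f)(x) = ∑_y T(x,y) (f(y) - f(x))`. -/
noncomputable def gen [Fintype X] (T : X → X → ℝ) (f : X → ℝ) : X → ℝ :=
  fun x => ∑ y, T x y * (f y - f x)

/-- The carré du champ operator: `(Γ f)(x) = (1/2) ∑_y T(x,y) (f(y) - f(x))²`. -/
noncomputable def carre [Fintype X] (T : X → X → ℝ) (f : X → ℝ) : X → ℝ :=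
  fun x => (1 / 2) * ∑ y, T x y * (f y - f x) ^ 2

/-- The generator as a matrix: `L = T - Id`. -/
noncomputable def genMat [Fintype X] [DecidableEq X] (T : X → X → ℝ) : Matrix X X ℝ :=
  fun x y => T x y - if x = y then 1 else 0

/-- The heat semigroup `P_t = exp (t L)` (matrix exponential). -/
noncomputable def heatSG [Fintype X] [DecidableEq X] (T : X → X → ℝ) (t : ℝ) : Matrix X X ℝ :=
  NormedSpace.exp (t • genMat T)

/-- Evolution of a measure (row vector) `μ_t = μ · exp (t L)`. -/
noncomputable def evolve [Fintype X] [DecidableEq X] (T : X → X → ℝ) (μ : X → ℝ) (t : ℝ) :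
    X → ℝ :=
  Matrix.vecMul μ (heatSG T t)

/-- The Lipschitz constant along edges: `Lip(g) = max {|g(x) - g(y)| : T(x,y) > 0}`. -/
noncomputable def Lip [Fintype X] (T : X → X → ℝ) (g : X → ℝ) : ℝ :=
  sSup {r | ∃ x y, 0 < T x y ∧ r = |g x - g y|}

/-- The point mass at `o`. -/
noncomputable def dirac [DecidableEq X] (o : X) : X → ℝ := fun x => if x = o then 1 else 0

open Matrix NormedSpace

lemma sq_div_two_le_one_add_abs_mul (u : ℝ) :
    u ^ 2 / 2 ≤ (1 + |u|) * (Real.exp u - 1 - u) := by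
  rcases le_or_gt 0 u with hu | hu
  · rw [abs_of_nonneg hu]
    nlinarith [Real.quadratic_le_exp_of_nonneg hu, Real.add_one_le_exp u]
  · -- `φ v = (1 + v) (e⁻ᵛ - 1 + v) - v² / 2` vanishes at `0` and has derivative `v (1 - e⁻ᵛ) ≥ 0`
    let φ : ℝ → ℝ := fun v => (1 + v) * (Real.exp (-v) - 1 + v) - v ^ 2 / 2
    have hφ : ∀ v, HasDerivAt φ (v * (1 - Real.exp (-v))) v := fun v =>
      ((((hasDerivAt_id v).const_add 1).mul
        ((((hasDerivAt_neg v).exp).sub_const 1).add (hasDerivAt_id v))).sub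
        ((hasDerivAt_pow 2 v).div_const 2)).congr_deriv (by simp only [Pi.add_apply, id_eq]; ring)
    have hmono : MonotoneOn φ (Set.Ici 0) := by
      refine monotoneOn_of_deriv_nonneg (convex_Ici 0)
        (fun v _ => (hφ v).continuousAt.continuousWithinAt)
        (fun v _ => (hφ v).differentiableAt.differentiableWithinAt) fun v hv => ?_
      rw [interior_Ici] at hv
      rw [(hφ v).deriv]
      exact mul_nonneg hv.out.le (sub_nonneg.2 (Real.exp_le_one_iff.2 (neg_nonpos.2 hv.out.le)))
    have := hmono Set.self_mem_Ici (Set.mem_Ici.2 (neg_nonneg.2 hu.le)) (neg_nonneg.2 hu.le)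
    simp only [φ, neg_neg, neg_zero, Real.exp_zero] at this
    rw [abs_of_neg hu]
    linarith

lemma half_mul_sq_log_sub_log_le {a b K : ℝ} (ha : 0 < a) (hb : 0 < b)
    (hK : |Real.log b - Real.log a| ≤ K) :
    a * (Real.log b - Real.log a) ^ 2 / 2
      ≤ (1 + K) * (b - a - a * (Real.log b - Real.log a)) := by
  set u := Real.log b - Real.log a
  have hb' : b = a * Real.exp u := by
    rw [Real.exp_sub, Real.exp_log hb, Real.exp_log ha, mul_div_cancel₀ _ ha.ne']
  have hu : u ^ 2 / 2 ≤ (1 + K) * (Real.exp u - 1 - u) :=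
    (sq_div_two_le_one_add_abs_mul u).trans <|
      mul_le_mul_of_nonneg_right (by linarith) (by linarith [Real.add_one_le_exp u])
  calc a * u ^ 2 / 2 = a * (u ^ 2 / 2) := by ring
    _ ≤ a * ((1 + K) * (Real.exp u - 1 - u)) := mul_le_mul_of_nonneg_left hu ha.le
    _ = (1 + K) * (b - a - a * u) := by rw [hb']; ring

def IsNonnegCurved [Fintype X] [DecidableEq X] (T : X → X → ℝ) : Prop :=
  ∀ t : ℝ, 0 ≤ t → ∀ g : X → ℝ, ∀ x : X,
    carre T ((heatSG T t).mulVec g) x ≤ (heatSG T t).mulVec (carre T g) x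

lemma Matrix.exp_apply_nonneg [Fintype X] [DecidableEq X] {A : Matrix X X ℝ}
    (hA : ∀ i j, 0 ≤ A i j) (i j : X) : 0 ≤ exp A i j := by
  rw [congrFun exp_eq_tsum_rat A]
  by_cases hs : Summable fun n : ℕ => ((Nat.factorial n : ℚ))⁻¹ • A ^ n
  · have hij := Pi.hasSum.1 (Pi.hasSum.1 hs.hasSum i) j
    refine hij.nonneg fun n => ?_
    rw [smul_apply, Rat.smul_def]
    exact mul_nonneg (by positivity) (pow_apply_nonneg hA n i j)
  · rw [tsum_eq_zero_of_not_summable hs]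
    rfl

section HeatSemigroup

variable [Fintype X] [DecidableEq X] (T : X → X → ℝ)

lemma heatSG_zero : heatSG T 0 = 1 := by
  rw [heatSG, zero_smul, exp_zero]

lemma heatSG_add (a b : ℝ) : heatSG T (a + b) = heatSG T a * heatSG T b := by
  rw [heatSG, heatSG, heatSG, add_smul]
  exact Matrix.exp_add_of_commute _ _ ((Commute.refl _).smul_left a |>.smul_right b)

lemma commute_genMat_heatSG (t : ℝ) : Commute (genMat T) (heatSG T t) :=
  ((Commute.refl _).smul_right t).exp_right

variable {T} in
lemma heatSG_apply_nonneg (hT : ∀ x y, 0 ≤ T x y) {t : ℝ} (ht : 0 ≤ t) (x y : X) :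
    0 ≤ heatSG T t x y := by
  have hsplit : t • genMat T = t • Matrix.of T + (-t) • 1 := by
    ext i j
    simp only [genMat, Matrix.smul_apply, Matrix.add_apply, of_apply, one_apply, smul_eq_mul]
    split_ifs <;> ring
  have hcomm : Commute (t • Matrix.of T) ((-t) • 1) :=
    (Commute.one_right _).smul_left _ |>.smul_right _
  rw [heatSG, hsplit, Matrix.exp_add_of_commute _ _ hcomm, smul_one_eq_diagonal,
    Matrix.exp_diagonal, mul_apply]
  refine Finset.sum_nonneg fun z _ => mul_nonneg
    (Matrix.exp_apply_nonneg (fun i j => mul_nonneg ht (hT i j)) x z) ?_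
  rw [diagonal_apply]
  split_ifs
  · rw [Pi.coe_exp, ← Real.exp_eq_exp_ℝ]
    exact (Real.exp_pos _).le
  · exact le_rfl

section Derivative

attribute [local instance] Matrix.linftyOpNormedRing Matrix.linftyOpNormedAlgebra

lemma hasDerivAt_heatSG_apply (x y : X) (t : ℝ) :
    HasDerivAt (fun s => heatSG T s x y) ((heatSG T t * genMat T) x y) t :=
  (entryLinearMap ℝ ℝ x y).toContinuousLinearMap.hasFDerivAt.comp_hasDerivAt t
    (hasDerivAt_exp_smul_const _ _)

end Derivative

variable {T} in
lemma hasDerivAt_heatSG_mulVec_apply {v : ℝ → X → ℝ} {v' : X → ℝ} {t : ℝ}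
    (hv : ∀ y, HasDerivAt (fun s => v s y) (v' y) t) (x : X) :
    HasDerivAt (fun s => (heatSG T s *ᵥ v s) x) ((heatSG T t *ᵥ (genMat T *ᵥ v t + v')) x) t := by
  have := HasDerivAt.fun_sum fun y (_ : y ∈ Finset.univ) =>
    (hasDerivAt_heatSG_apply T x y t).fun_mul (hv y)
  rw [mulVec_add, mulVec_mulVec]
  simpa only [mulVec, dotProduct, Pi.add_apply, Finset.sum_add_distrib] using this

lemma hasDerivAt_heatSG_mulVec (v : X → ℝ) (x : X) (t : ℝ) :
    HasDerivAt (fun s => (heatSG T s *ᵥ v) x) ((genMat T *ᵥ (heatSG T t *ᵥ v)) x) t := by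
  have := hasDerivAt_heatSG_mulVec_apply (T := T) (v := fun _ => v) (v' := 0)
    (fun y => hasDerivAt_const t (v y)) x
  rwa [add_zero, mulVec_mulVec, ← (commute_genMat_heatSG T t).eq, ← mulVec_mulVec] at this

end HeatSemigroup

section Generator

variable [Fintype X] {T : X → X → ℝ}

lemma gen_sq_sub_two_mul (w : X → ℝ) (x : X) :
    gen T (fun y => w y ^ 2) x - 2 * w x * gen T w x = 2 * carre T w x := by
  simp only [gen, carre, Finset.mul_sum, ← Finset.sum_sub_distrib]
  exact Finset.sum_congr rfl fun y _ => by ring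

lemma genMat_mulVec [DecidableEq X] (hT : ∀ x, ∑ y, T x y = 1) (v : X → ℝ) :
    genMat T *ᵥ v = gen T v := by
  ext x
  simp only [mulVec, dotProduct, genMat, gen, sub_mul, ite_mul, one_mul, zero_mul,
    Finset.sum_sub_distrib, Finset.sum_ite_eq, Finset.mem_univ, if_true, mul_sub,
    ← Finset.sum_mul, hT x]

lemma sum_mul_gen_eq_zero (hT : ∀ x, ∑ y, T x y = 1) {pi : X → ℝ}
    (hstat : ∀ y, ∑ x, pi x * T x y = pi y) (f : X → ℝ) :
    ∑ x, pi x * gen T f x = 0 := by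
  have hin : ∑ x, ∑ y, pi x * (T x y * f y) = ∑ y, pi y * f y := by
    rw [Finset.sum_comm]
    simp only [← mul_assoc, ← Finset.sum_mul, hstat]
  have hout : ∑ x, ∑ y, pi x * (T x y * f x) = ∑ x, pi x * f x := by
    simp only [mul_comm (T _ _), ← mul_assoc, ← Finset.mul_sum, hT, mul_one]
  simp only [gen, Finset.mul_sum, mul_sub, Finset.sum_sub_distrib, hin, hout, sub_self]

end Generator

section ReversePoincare

variable [Fintype X] [DecidableEq X] {T : X → X → ℝ}

lemma heatSG_mulVec_mono (hT : ∀ x y, 0 ≤ T x y) {t : ℝ} (ht : 0 ≤ t) {f g : X → ℝ}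
    (hfg : ∀ y, f y ≤ g y) (x : X) : (heatSG T t *ᵥ f) x ≤ (heatSG T t *ᵥ g) x :=
  Finset.sum_le_sum fun y _ => mul_le_mul_of_nonneg_left (hfg y) (heatSG_apply_nonneg hT ht x y)

lemma heatSG_mulVec_sq_sub_sq_le (hT : IsStochastic T) (hcurv : IsNonnegCurved T)
    (h : X → ℝ) (x : X) {t : ℝ} (ht : 0 ≤ t) :
    (heatSG T t *ᵥ fun y => h y ^ 2) x - (heatSG T t *ᵥ h) x ^ 2
      ≤ 2 * t * (heatSG T t *ᵥ carre T h) x := by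
  let w : ℝ → X → ℝ := fun s => heatSG T (t - s) *ᵥ h
  let φ : ℝ → ℝ := fun s => (heatSG T s *ᵥ fun y => w s y ^ 2) x
  have hw : ∀ s y, HasDerivAt (fun r => w r y) (-(genMat T *ᵥ w s) y) s := fun s y => by
    have := (hasDerivAt_heatSG_mulVec T h y (t - s)).comp s ((hasDerivAt_id s).const_sub t)
    exact this.congr_deriv (by simp [w])
  have hφ : ∀ s, HasDerivAt φ (2 * (heatSG T s *ᵥ carre T (w s)) x) s := fun s => by
    have hvec : genMat T *ᵥ (fun y => w s y ^ 2) + (fun y => 2 * w s y * -(genMat T *ᵥ w s) y)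
        = (2 : ℝ) • carre T (w s) := by
      ext y
      simp only [genMat_mulVec hT.2, Pi.add_apply, Pi.smul_apply, smul_eq_mul,
        ← gen_sq_sub_two_mul]
      ring
    have := hasDerivAt_heatSG_mulVec_apply (T := T) (fun y => (hw s y).pow 2) x
    simp only [Pi.pow_apply, Nat.cast_ofNat, Nat.add_one_sub_one, pow_one] at this
    rw [hvec, mulVec_smul] at this
    exact this
  have hrate : ∀ s ∈ Set.Icc 0 t,
      2 * (heatSG T s *ᵥ carre T (w s)) x ≤ 2 * (heatSG T t *ᵥ carre T h) x := by
    intro s hs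
    have hΓ := heatSG_mulVec_mono hT.1 hs.1 (hcurv (t - s) (sub_nonneg.2 hs.2) h) x
    rw [mulVec_mulVec, ← heatSG_add, add_sub_cancel] at hΓ
    linarith
  have hmvt := (convex_Icc 0 t).image_sub_le_mul_sub_of_deriv_le
    (fun s _ => (hφ s).continuousAt.continuousWithinAt)
    (fun s _ => (hφ s).differentiableAt.differentiableWithinAt)
    (fun s hs => (hφ s).deriv ▸ hrate s (interior_subset hs)) 0 ⟨le_rfl, ht⟩ t ⟨ht, le_rfl⟩ ht
  simp only [φ, w, sub_self, sub_zero, heatSG_zero, one_mulVec] at hmvt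
  linarith

end ReversePoincare

section EntropyProduction

variable [Fintype X] {T : X → X → ℝ}

lemma sum_mul_carre_log_le (hT : IsStochastic T) {pi : X → ℝ} (hpi : ∀ x, 0 ≤ pi x)
    (hstat : ∀ y, ∑ x, pi x * T x y = pi y) {f : X → ℝ} (hf : ∀ x, 0 < f x) {K : ℝ}
    (hK : ∀ x y, 0 < T x y → |Real.log (f y) - Real.log (f x)| ≤ K) :
    ∑ x, pi x * f x * carre T (fun z => Real.log (f z)) x
      ≤ (1 + K) * -∑ x, pi x * f x * gen T (fun z => Real.log (f z)) x := by
  have hterm : ∀ x, pi x * f x * carre T (fun z => Real.log (f z)) x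
      ≤ (1 + K) * (pi x * gen T f x - pi x * f x * gen T (fun z => Real.log (f z)) x) := by
    intro x
    simp only [carre, gen, Finset.mul_sum, ← Finset.sum_sub_distrib]
    refine Finset.sum_le_sum fun y _ => ?_
    rcases (hT.1 x y).eq_or_lt with hxy | hxy
    · simp [← hxy]
    · calc _ = pi x * T x y * (f x * (Real.log (f y) - Real.log (f x)) ^ 2 / 2) := by ring
        _ ≤ pi x * T x y * ((1 + K) * (f y - f x - f x * (Real.log (f y) - Real.log (f x)))) :=
          mul_le_mul_of_nonneg_left (half_mul_sq_log_sub_log_le (hf x) (hf y) (hK x y hxy))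
            (mul_nonneg (hpi x) hxy.le)
        _ = _ := by ring
  calc _ ≤ ∑ x, (1 + K) * (pi x * gen T f x - pi x * f x * gen T (fun z => Real.log (f z)) x) :=
        Finset.sum_le_sum fun x _ => hterm x
    _ = _ := by
      rw [← Finset.mul_sum, Finset.sum_sub_distrib, sum_mul_gen_eq_zero hT.2 hstat, zero_sub]

end EntropyProduction

section Lipschitz

variable [Fintype X] {T : X → X → ℝ}

lemma abs_sub_le_Lip (g : X → ℝ) {x y : X} (hxy : 0 < T x y) : |g x - g y| ≤ Lip T g := by
  refine le_csSup ((Set.finite_range fun p : X × X => |g p.1 - g p.2|).subset ?_).bddAbove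
    ⟨x, y, hxy, rfl⟩
  rintro _ ⟨x, y, -, rfl⟩
  exact ⟨(x, y), rfl⟩

lemma Lip_nonneg (g : X → ℝ) : 0 ≤ Lip T g :=
  Real.sSup_nonneg <| by
    rintro _ ⟨x, y, -, rfl⟩
    exact abs_nonneg _

end Lipschitz

lemma evolve_dirac [Fintype X] [DecidableEq X] (T : X → X → ℝ) (o : X) (t : ℝ) :
    evolve T (dirac o) t = heatSG T t o := by
  ext x
  simp [evolve, dirac, vecMul, dotProduct]

theorem information_differential_inequality_general [Fintype X] [DecidableEq X]
    (T : X → X → ℝ) (hT : IsStochastic T)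
    (pi : X → ℝ) (hpos : ∀ x, 0 < pi x)
    (hstat : ∀ y, ∑ x, pi x * T x y = pi y)
    (hcurv : ∀ t : ℝ, 0 ≤ t → ∀ g : X → ℝ, ∀ x : X,
      carre T ((heatSG T t).mulVec g) x ≤ (heatSG T t).mulVec (carre T g) x)
    (o : X) (t : ℝ) (ht : 0 < t)
    (hft : ∀ x, 0 < evolve T (dirac o) t x / pi x) :
    ∑ x, pi x * (evolve T (dirac o) t x / pi x) *
        gen T (fun z => Real.log (evolve T (dirac o) t z / pi z)) x ≤
      -((∑ x, pi x * (evolve T (dirac o) t x / pi x) *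
            Real.log (evolve T (dirac o) t x / pi x) ^ 2) -
          (∑ x, pi x * (evolve T (dirac o) t x / pi x) *
            Real.log (evolve T (dirac o) t x / pi x)) ^ 2) /
        (2 * t * (1 + Lip T (fun z => Real.log (evolve T (dirac o) t z / pi z)))) := by
  let g : X → ℝ := fun z => Real.log (evolve T (dirac o) t z / pi z)
  have hdens : ∀ x, pi x * (evolve T (dirac o) t x / pi x) = heatSG T t o x := fun x => by
    rw [mul_div_cancel₀ _ (hpos x).ne', evolve_dirac]
  have hvar := heatSG_mulVec_sq_sub_sq_le hT hcurv g o ht.le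
  have hfisher := sum_mul_carre_log_le hT (fun x => (hpos x).le) hstat hft
    fun x y hxy => abs_sub_comm (g x) (g y) ▸ abs_sub_le_Lip g hxy
  have hD : 0 < 2 * t * (1 + Lip T g) := by
    have := Lip_nonneg (T := T) g
    positivity
  simp only [hdens] at hfisher ⊢
  simp only [mulVec, dotProduct, g] at hvar
  rw [neg_div, le_neg, div_le_iff₀ hD]
  linarith [mul_le_mul_of_nonneg_left hfisher (by positivity : (0 : ℝ) ≤ 2 * t)]

/-- Information-differential inequality: for a non-negatively curved chain
started at a deterministic point `o`, with `f_t` the density of the law at time `t > 0`,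
`∑_x π(x) f_t(x) (L log f_t)(x) ≤ - Varent / (2t (1 + Lip(log f_t)))`. -/
theorem information_differential_inequality [Fintype X] [DecidableEq X]
    (T : X → X → ℝ) (hT : IsStochastic T)
    (pi : X → ℝ) (hpos : ∀ x, 0 < pi x) (hsum : ∑ x, pi x = 1)
    (hstat : ∀ y, ∑ x, pi x * T x y = pi y)
    (hcurv : ∀ t : ℝ, 0 ≤ t → ∀ g : X → ℝ, ∀ x : X,
      carre T ((heatSG T t).mulVec g) x ≤ (heatSG T t).mulVec (carre T g) x)
    (o : X) (t : ℝ) (ht : 0 < t)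
    (hft : ∀ x, 0 < evolve T (dirac o) t x / pi x) :
    ∑ x, pi x * (evolve T (dirac o) t x / pi x) *
        gen T (fun z => Real.log (evolve T (dirac o) t z / pi z)) x ≤
      -((∑ x, pi x * (evolve T (dirac o) t x / pi x) *
            Real.log (evolve T (dirac o) t x / pi x) ^ 2) -
          (∑ x, pi x * (evolve T (dirac o) t x / pi x) *
            Real.log (evolve T (dirac o) t x / pi x)) ^ 2) /
        (2 * t * (1 + Lip T (fun z => Real.log (evolve T (dirac o) t z / pi z)))) :=
  information_differential_inequality_general T hT pi hpos hstat hcurv o t ht hft
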